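/- Let G = (V,E) be a finite connected simple graph with maximum degree at most d (where d ≥ 2) and tree-length at most t, and let s ∈ V. In the layering graph H of G with respect to s, rooted at the class {s}, every node has at most d^{3t+2} − 1 children; that is, every layering class of layer i is adjacent in H to at most d^{3t+2} − 1 layering classes of layer i+1. -/

import Mathlib

open SimpleGraph

/-- A tree decomposition of a graph `G`, with decomposition tree indexed by `ι`. -/
structure TreeDecomp {V : Type} (G : SimpleGraph V) (ι : Type) : Type where
  /-- the decomposition tree -/
  tree : SimpleGraph ι
  /-- the decomposition tree is a tree -/
  isTree : tree.IsTree
  /-- the bags -/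
  bag : ι → Set V
  /-- every vertex of `G` belongs to some bag -/
  bag_cover : ∀ v : V, ∃ t, v ∈ bag t
  /-- both endpoints of every edge of `G` lie in a common bag -/
  bag_edge : ∀ ⦃u v : V⦄, G.Adj u v → ∃ t, u ∈ bag t ∧ v ∈ bag t
  /-- the nodes whose bag contains a given vertex induce a connected subtree -/
  bag_conn : ∀ v : V, (tree.induce {t | v ∈ bag t}).Connected

/-- `G` has a tree decomposition all of whose bags have diameter at most `ℓ` in `G`. -/
def HasTDLength {V : Type} (G : SimpleGraph V) (ℓ : ℕ) : Prop :=
  ∃ (ι : Type) (td : TreeDecomp G ι), ∀ t, ∀ u ∈ td.bag t, ∀ v ∈ td.bag t, G.dist u v ≤ ℓ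

/-- The tree-length of `G`: the minimum length over all tree decompositions of `G`. -/
noncomputable def treeLength {V : Type} (G : SimpleGraph V) : ℕ :=
  sInf {ℓ | HasTDLength G ℓ}

/-- `u` and `v` are layering-equivalent w.r.t. source `s`: they lie at the same
distance `i` from `s` and are joined by a path all of whose (intermediate)
vertices are at distance at least `i` from `s`. -/
def LayerEquiv {V : Type} (G : SimpleGraph V) (s u v : V) : Prop :=
  G.dist s u = G.dist s v ∧
    ∃ p : G.Walk u v, p.IsPath ∧ ∀ w ∈ p.support, G.dist s u ≤ G.dist s w

/-- The layering class of the vertex `v` w.r.t. source `s`. -/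
def layeringClassOf {V : Type} (G : SimpleGraph V) (s v : V) : Set V :=
  {u | LayerEquiv G s v u}

/-- `C` is a layering class of `G` w.r.t. source `s`. -/
def IsLayeringClass {V : Type} (G : SimpleGraph V) (s : V) (C : Set V) : Prop :=
  ∃ v, C = layeringClassOf G s v

/-- The layering graph `H`: vertices are the layering classes, two distinct
classes being adjacent iff `G` has an edge with one endpoint in each. -/
def layeringGraph {V : Type} (G : SimpleGraph V) (s : V) :
    SimpleGraph {C : Set V // IsLayeringClass G s C} where
  Adj C D := C ≠ D ∧ ∃ u ∈ C.1, ∃ w ∈ D.1, G.Adj u w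
  symm := by
    constructor
    rintro C D ⟨hne, u, hu, w, hw, h⟩
    exact ⟨hne.symm, w, hw, u, hu, h.symm⟩
  loopless := by constructor; rintro C ⟨hne, -⟩; exact hne rfl


/-!
For a tree decomposition of length `ℓ`, every layering class has diameter at most `3ℓ`. Let `u`,
`v` lie in the class of layer `i`, pick bags containing `s`, `u`, `v`, and let `m` be the median
of these three nodes in the decomposition tree. Bag `m` separates each pair, so it meets a
shortest `s`–`u` path in some `y`, a shortest `s`–`v` path in some `z`, and a `u`–`v` path through
layers `≥ i` in some `x`. Since `dist s x ≥ i` and `x`, `y`, `z` are pairwise within `ℓ`, the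
vertex `y` is within `ℓ` of `u` and `z` within `ℓ` of `v`, so `dist u v ≤ 3ℓ`. Every child of a
class `C ∋ v₀` is therefore the class of a vertex at distance at most `3t + 1` from `v₀`, and in a
graph of maximum degree `d ≥ 2` a ball of radius `r` has at most `d ^ (r + 1) - 1` vertices.
-/

open Finset

namespace SimpleGraph

variable {V : Type} {G : SimpleGraph V}

lemma exists_walk_support_subset_of_induce_connected {S : Set V}
    (hS : (G.induce S).Connected) {u v : V} (hu : u ∈ S) (hv : v ∈ S) :
    ∃ w : G.Walk u v, ∀ x ∈ w.support, x ∈ S := by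
  obtain ⟨w⟩ := hS ⟨u, hu⟩ ⟨v, hv⟩
  refine ⟨w.map (Embedding.induce S).toHom, fun x hx => ?_⟩
  obtain ⟨⟨y, hy⟩, -, rfl⟩ := List.mem_map.1 (Walk.support_map _ w ▸ hx)
  exact hy

/-- In a tree, `m` is the median of `a`, `b`, `c`. The last clause is the invariant that keeps
`r` a path through the induction. -/
lemma Walk.exists_isPath_through_mem_support_inter {a b c : V}
    (q : G.Walk a b) (hq : q.IsPath) (p : G.Walk b c) (hp : p.IsPath) :
    ∃ m ∈ q.support, m ∈ p.support ∧ ∃ r : G.Walk a c, r.IsPath ∧ m ∈ r.support ∧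
      ∀ x ∈ r.support, x ∈ q.support ∨ x ∈ p.support := by
  classical
  induction q with
  | nil =>
    exact ⟨_, start_mem_support _, p.start_mem_support, p, hp, p.start_mem_support,
      fun _ hx => .inr hx⟩
  | @cons a a' b h q ih =>
    rw [cons_isPath_iff] at hq
    by_cases ha : a ∈ p.support
    · exact ⟨a, start_mem_support _, ha, p.dropUntil a ha, hp.dropUntil ha, start_mem_support _,
        fun x hx => .inr (p.support_dropUntil_subset_support ha hx)⟩
    · obtain ⟨m, hmq, hmp, r, hr, hmr, hcover⟩ := ih hq.1 p hp
      have har : a ∉ r.support := fun hx => (hcover a hx).elim hq.2 ha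
      refine ⟨m, by simp [hmq], hmp, cons h r, hr.cons har, by simp [hmr], fun x hx => ?_⟩
      rw [support_cons, List.mem_cons] at hx
      rcases hx with rfl | hx
      · exact .inl (start_mem_support _)
      · exact (hcover x hx).imp (fun hxq => by simp [hxq]) id

lemma Walk.dist_add_dist_of_mem_support {s u y : V} {p : G.Walk s u}
    (hp : p.length = G.dist s u) (hy : y ∈ p.support) :
    G.dist s y + G.dist y u = G.dist s u := by
  classical
  rw [← length_eq_dist_of_subwalk hp (p.isSubwalk_takeUntil hy),
    ← length_eq_dist_of_subwalk hp (p.isSubwalk_dropUntil hy), ← length_append, take_spec, hp]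

lemma Connected.dist_le_of_mem_shortest_walk (hG : G.Connected) {s u x y : V} {p : G.Walk s u}
    (hp : p.length = G.dist s u) (hy : y ∈ p.support) (hx : G.dist s u ≤ G.dist s x) :
    G.dist y u ≤ G.dist y x := by
  have hsplit := p.dist_add_dist_of_mem_support hp hy
  have htri : G.dist s x ≤ G.dist s y + G.dist y x := hG.dist_triangle
  omega

lemma Reachable.exists_adj_dist_lt {u v : V} (huv : G.Reachable u v) (hne : u ≠ v) :
    ∃ w, G.Adj w v ∧ G.dist u w < G.dist u v := by
  obtain ⟨p, hp⟩ := huv.symm.exists_walk_length_eq_dist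
  cases p with
  | nil => exact absurd rfl hne
  | cons hvw q =>
    refine ⟨_, hvw.symm, ?_⟩
    rw [dist_comm, dist_comm (u := u), ← hp, Walk.length_cons]
    exact Nat.lt_succ_of_le (dist_le q)

lemma Connected.card_filter_dist_le_le [Fintype V] [DecidableEq V] [DecidableRel G.Adj]
    (hG : G.Connected) {d : ℕ} (hd : 2 ≤ d) (hdeg : ∀ v, G.degree v ≤ d) (u : V) (r : ℕ) :
    #{v | G.dist u v ≤ r} ≤ d ^ (r + 1) - 1 := by
  induction r with
  | zero =>
    have hball : ({v | G.dist u v ≤ 0} : Finset V) = {u} := by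
      ext v
      simp [hG.dist_eq_zero_iff, eq_comm]
    simp only [hball, card_singleton, zero_add, pow_one]
    omega
  | succ r ih =>
    have hsub : ({v | G.dist u v ≤ r + 1} : Finset V) ⊆
        insert u (({v | G.dist u v ≤ r} : Finset V).biUnion fun w => G.neighborFinset w) := by
      intro v hv
      rcases eq_or_ne u v with rfl | hne
      · exact mem_insert_self _ _
      obtain ⟨w, hwv, hw⟩ := (hG u v).exists_adj_dist_lt hne
      simp only [mem_filter, mem_univ, true_and] at hv
      refine mem_insert_of_mem (mem_biUnion.2 ⟨w, ?_, by simpa using hwv⟩)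
      simp only [mem_filter, mem_univ, true_and]
      omega
    have hpow : d ≤ d ^ (r + 1) * d := Nat.le_mul_of_pos_left d (Nat.one_le_pow _ _ (by omega))
    calc #{v | G.dist u v ≤ r + 1}
        ≤ #(({v | G.dist u v ≤ r} : Finset V).biUnion fun w => G.neighborFinset w) + 1 :=
          (card_le_card hsub).trans (card_insert_le _ _)
      _ ≤ #{v | G.dist u v ≤ r} * d + 1 := by
          gcongr
          exact card_biUnion_le_card_mul _ _ _ fun w _ =>
            (card_neighborFinset_eq_degree G w).trans_le (hdeg w)
      _ ≤ (d ^ (r + 1) - 1) * d + 1 := by gcongr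
      _ ≤ d ^ (r + 1 + 1) - 1 := by
          rw [pow_succ _ (r + 1), Nat.sub_one_mul]
          omega

end SimpleGraph

namespace TreeDecomp

variable {V ι : Type} {G : SimpleGraph V} (td : TreeDecomp G ι)

lemma exists_walk_not_mem_support_of_mem_bag {x : V} {m n n' : ι} (hxm : x ∉ td.bag m)
    (hn : x ∈ td.bag n) (hn' : x ∈ td.bag n') : ∃ w : td.tree.Walk n n', m ∉ w.support := by
  obtain ⟨w, hw⟩ := exists_walk_support_subset_of_induce_connected (td.bag_conn x) hn hn'
  exact ⟨w, fun hm => hxm (hw m hm)⟩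

lemma exists_walk_not_mem_support_of_walk {m : ι} {u v : V} (W : G.Walk u v)
    (hW : ∀ x ∈ W.support, x ∉ td.bag m) {n n' : ι} (hn : u ∈ td.bag n) (hn' : v ∈ td.bag n') :
    ∃ w : td.tree.Walk n n', m ∉ w.support := by
  induction W generalizing n with
  | nil => exact td.exists_walk_not_mem_support_of_mem_bag (hW _ (Walk.start_mem_support _)) hn hn'
  | cons h W ih =>
    obtain ⟨k, hk, hk'⟩ := td.bag_edge h
    obtain ⟨w₁, hw₁⟩ :=
      td.exists_walk_not_mem_support_of_mem_bag (hW _ (Walk.start_mem_support _)) hn hk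
    obtain ⟨w₂, hw₂⟩ := ih (fun x hx => hW x (by simp [hx])) hk' hn'
    exact ⟨w₁.append w₂, by rw [Walk.mem_support_append_iff]; exact fun h => h.elim hw₁ hw₂⟩

lemma exists_mem_support_mem_bag_of_isPath {a b m : ι} {π : td.tree.Walk a b} (hπ : π.IsPath)
    (hm : m ∈ π.support) {u v : V} (hu : u ∈ td.bag a) (hv : v ∈ td.bag b) (W : G.Walk u v) :
    ∃ x ∈ W.support, x ∈ td.bag m := by
  classical
  by_contra! hW
  obtain ⟨w, hw⟩ := td.exists_walk_not_mem_support_of_walk W hW hu hv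
  have hπw : (w.toPath : td.tree.Walk a b) = π :=
    (td.isTree.existsUnique_path a b).unique w.toPath.2 hπ
  exact hw (w.support_toPath_subset_support (hπw ▸ hm))

lemma dist_le_three_mul (hG : G.Connected) {ℓ : ℕ}
    (hlen : ∀ n, ∀ x ∈ td.bag n, ∀ y ∈ td.bag n, G.dist x y ≤ ℓ)
    {s u v : V} (hsu : G.dist s u = G.dist s v) (P : G.Walk u v)
    (hP : ∀ w ∈ P.support, G.dist s u ≤ G.dist s w) : G.dist u v ≤ 3 * ℓ := by
  obtain ⟨a, ha⟩ := td.bag_cover s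
  obtain ⟨b, hb⟩ := td.bag_cover u
  obtain ⟨c, hc⟩ := td.bag_cover v
  obtain ⟨πab, hπab, -⟩ := td.isTree.existsUnique_path a b
  obtain ⟨πbc, hπbc, -⟩ := td.isTree.existsUnique_path b c
  obtain ⟨m, hmab, hmbc, πac, hπac, hmac, -⟩ :=
    πab.exists_isPath_through_mem_support_inter hπab πbc hπbc
  obtain ⟨Q, hQ⟩ := hG.exists_walk_length_eq_dist s u
  obtain ⟨R, hR⟩ := hG.exists_walk_length_eq_dist s v
  obtain ⟨y, hyQ, hym⟩ := td.exists_mem_support_mem_bag_of_isPath hπab hmab ha hb Q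
  obtain ⟨z, hzR, hzm⟩ := td.exists_mem_support_mem_bag_of_isPath hπac hmac ha hc R
  obtain ⟨x, hxP, hxm⟩ := td.exists_mem_support_mem_bag_of_isPath hπbc hmbc hb hc P
  have hyu : G.dist y u ≤ ℓ :=
    (hG.dist_le_of_mem_shortest_walk hQ hyQ (hP x hxP)).trans (hlen m y hym x hxm)
  have hzv : G.dist z v ≤ ℓ :=
    (hG.dist_le_of_mem_shortest_walk hR hzR (hsu ▸ hP x hxP)).trans (hlen m z hzm x hxm)
  have hyz : G.dist y z ≤ ℓ := hlen m y hym z hzm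
  have huz : G.dist u z ≤ G.dist u y + G.dist y z := hG.dist_triangle
  have huv : G.dist u v ≤ G.dist u z + G.dist z v := hG.dist_triangle
  have huy : G.dist u y = G.dist y u := dist_comm
  omega

def oneBag (G : SimpleGraph V) : TreeDecomp G Unit where
  tree := ⊥
  isTree := .of_subsingleton
  bag _ := Set.univ
  bag_cover _ := ⟨(), Set.mem_univ _⟩
  bag_edge _ _ _ := ⟨(), Set.mem_univ _, Set.mem_univ _⟩
  bag_conn _ := @Connected.of_subsingleton _ _ ⟨⟨(), Set.mem_univ _⟩⟩ _

end TreeDecomp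

section TreeLength

variable {V : Type} {G : SimpleGraph V}

lemma HasTDLength.mono {ℓ ℓ' : ℕ} (h : HasTDLength G ℓ) (hle : ℓ ≤ ℓ') : HasTDLength G ℓ' :=
  let ⟨ι, td, hlen⟩ := h
  ⟨ι, td, fun n x hx y hy => (hlen n x hx y hy).trans hle⟩

lemma hasTDLength_card [Fintype V] (G : SimpleGraph V) : HasTDLength G (Fintype.card V) := by
  refine ⟨Unit, .oneBag G, fun _ u _ v _ => ?_⟩
  by_cases huv : G.Reachable u v
  · obtain ⟨p, hp, hlen⟩ := huv.exists_path_of_dist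
    exact hlen ▸ hp.length_lt.le
  · simp [dist_eq_zero_of_not_reachable huv]

lemma hasTDLength_of_treeLength_le [Fintype V] {t : ℕ} (h : treeLength G ≤ t) :
    HasTDLength G t := by
  have hmin : treeLength G ∈ {ℓ | HasTDLength G ℓ} := Nat.sInf_mem ⟨_, hasTDLength_card G⟩
  exact hmin.mono h

end TreeLength

namespace LayerEquiv

variable {V : Type} {G : SimpleGraph V} {s u v w : V}

lemma symm (h : LayerEquiv G s u v) : LayerEquiv G s v u := by
  obtain ⟨hd, p, hp, hsup⟩ := h
  refine ⟨hd.symm, p.reverse, hp.reverse, fun x hx => ?_⟩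
  rw [Walk.support_reverse, List.mem_reverse] at hx
  exact hd ▸ hsup x hx

lemma trans (h₁ : LayerEquiv G s u v) (h₂ : LayerEquiv G s v w) : LayerEquiv G s u w := by
  classical
  obtain ⟨hd₁, p₁, -, hs₁⟩ := h₁
  obtain ⟨hd₂, p₂, -, hs₂⟩ := h₂
  refine ⟨hd₁.trans hd₂, (p₁.append p₂).toPath, (p₁.append p₂).toPath.2, fun x hx => ?_⟩
  rcases (Walk.mem_support_append_iff _ _).1 (Walk.support_toPath_subset_support _ hx) with hx | hx
  · exact hs₁ x hx
  · exact hd₁ ▸ hs₂ x hx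

end LayerEquiv

lemma layeringClassOf_eq_of_mem {V : Type} {G : SimpleGraph V} {s v w : V}
    (h : w ∈ layeringClassOf G s v) : layeringClassOf G s v = layeringClassOf G s w :=
  Set.ext fun _ => ⟨h.symm.trans, h.trans⟩

lemma HasTDLength.dist_le_of_mem_layeringClassOf {V : Type} {G : SimpleGraph V} {ℓ : ℕ}
    (h : HasTDLength G ℓ) (hG : G.Connected) {s u v : V} (hu : u ∈ layeringClassOf G s v) :
    G.dist v u ≤ 3 * ℓ :=
  let ⟨_, td, hlen⟩ := h
  let ⟨hd, P, _, hP⟩ := hu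
  td.dist_le_three_mul hG hlen hd P hP

lemma layeringGraph_neighborSet_subset_image {V : Type} {G : SimpleGraph V} {ℓ : ℕ}
    (h : HasTDLength G ℓ) (hG : G.Connected) {s v₀ : V} {C : {C : Set V // IsLayeringClass G s C}}
    (hC : C.1 = layeringClassOf G s v₀) :
    (layeringGraph G s).neighborSet C ⊆
      (fun w => ⟨layeringClassOf G s w, w, rfl⟩) '' {w | G.dist v₀ w ≤ 3 * ℓ + 1} := by
  rintro D ⟨-, u, hu, w, hw, huw⟩
  obtain ⟨x, hD⟩ := D.2
  refine ⟨w, ?_, Subtype.ext ((layeringClassOf_eq_of_mem (hD ▸ hw)).symm.trans hD.symm)⟩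
  have htri : G.dist v₀ w ≤ G.dist v₀ u + G.dist u w := hG.dist_triangle
  rw [dist_eq_one_iff_adj.2 huw] at htri
  exact htri.trans (by simpa using h.dist_le_of_mem_layeringClassOf hG (hC ▸ hu))

/-- Let `G` be a finite connected simple graph with maximum degree
at most `d` (where `d ≥ 2`) and tree-length at most `t`. In the layering graph `H`
rooted at the class `{s}`, every node has at most `d^(3t+2) − 1` children: every
layering class of layer `i` is adjacent in `H` to at most `d^(3t+2) − 1` layering
classes of layer `i + 1`. -/
theorem layeringGraph_children_card_le {V : Type} [Fintype V]
    (G : SimpleGraph V) (hG : G.Connected) (d t : ℕ) (hd : 2 ≤ d)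
    (hdeg : ∀ v : V, (G.neighborSet v).ncard ≤ d)
    (htl : treeLength G ≤ t) (s : V)
    (C : {C : Set V // IsLayeringClass G s C}) :
    {D : {C : Set V // IsLayeringClass G s C} |
        (layeringGraph G s).Adj C D ∧
          ∀ u ∈ C.1, ∀ w ∈ D.1, G.dist s w = G.dist s u + 1}.ncard
      ≤ d ^ (3 * t + 2) - 1 := by
  classical
  obtain ⟨v₀, hC⟩ := C.2
  have hdegree : ∀ v, G.degree v ≤ d := fun v => by
    rw [← card_neighborSet_eq_degree, ← Nat.card_eq_fintype_card, Nat.card_coe_set_eq]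
    exact hdeg v
  calc _ ≤ ((layeringGraph G s).neighborSet C).ncard :=
        Set.ncard_le_ncard (fun D hD => hD.1) (Set.toFinite _)
    _ ≤ (_ '' {w | G.dist v₀ w ≤ 3 * t + 1}).ncard :=
        Set.ncard_le_ncard
          (layeringGraph_neighborSet_subset_image (hasTDLength_of_treeLength_le htl) hG hC)
          (Set.toFinite _)
    _ ≤ {w | G.dist v₀ w ≤ 3 * t + 1}.ncard := Set.ncard_image_le (Set.toFinite _)
    _ ≤ d ^ (3 * t + 2) - 1 := by
        rw [Set.ncard_eq_toFinset_card', Set.toFinset_ofPred]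
        exact hG.card_filter_dist_le_le hd hdegree v₀ (3 * t + 1)
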